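/- arXiv:2605.05219 — 3 statements merged into one kernel-verified Lean document; each statement's English description precedes it below -/
import Mathlib

section
/- Under the uniform distribution on {1,...,N}, the optimal expected recomputation with M checkpoints equals (1/N)[(K-ρ)·q(q-1)/2 + ρ·q(q+1)/2], where K = M+1 and N+1 = qK + ρ with 0 ≤ ρ < K. -/
open Finset

/-- The recomputation cost at depth `t` for checkpoint set `C`. -/
def resumeCost (C : Finset ℕ) (t : ℕ) : ℕ := t - (C.filter (fun c => c ≤ t)).sup id

def costSum (N : ℕ) (C : Finset ℕ) : ℕ := ∑ t ∈ Icc 1 N, resumeCost C t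

lemma sum_shift (c N : ℕ) :
    2 * ∑ t ∈ Icc c N, (t - c) = (N - c) * (N - c + 1) := by
  rcases le_or_gt c N with h | h
  · have h1 : ∑ t ∈ Icc c N, (t - c) = ∑ i ∈ range (N + 1 - c), i := by
      rw [← Finset.Ico_add_one_right_eq_Icc, Finset.sum_Ico_eq_sum_range]
      exact Finset.sum_congr rfl (fun i _ => by omega)
    rw [h1, mul_comm, Finset.sum_range_id_mul_two,
      show N + 1 - c = (N - c) + 1 by omega, Nat.add_sub_cancel, mul_comm]
  · rw [Finset.Icc_eq_empty (by omega)]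
    simp; omega

lemma costSum_empty (N : ℕ) : 2 * costSum N ∅ = N * (N + 1) := by
  simp only [costSum, resumeCost, Finset.filter_empty, Finset.sup_empty,
    Nat.bot_eq_zero, Nat.sub_zero]
  have h1 : ∑ t ∈ Icc 1 N, t = ∑ t ∈ Icc 0 N, (t - 0) := by
    simp only [Nat.sub_zero]
    refine Finset.sum_subset (fun x hx => ?_) (fun x hx hx' => ?_)
    · simp only [Finset.mem_Icc] at hx ⊢; omega
    · simp only [Finset.mem_Icc] at hx hx'; omega
  rw [h1, sum_shift 0 N]
  simp

lemma costSum_rec (N : ℕ) (C : Finset ℕ) (hC : C.Nonempty) (hsub : C ⊆ Icc 1 N) :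
    costSum N C = costSum (C.max' hC - 1) (C.erase (C.max' hC))
      + ∑ t ∈ Icc (C.max' hC) N, (t - C.max' hC) := by
  set c := C.max' hC with hcdef
  have hcC : c ∈ C := C.max'_mem hC
  have hc := hsub hcC
  simp only [mem_Icc] at hc
  have hU : Icc 1 N = Icc 1 (c-1) ∪ Icc c N := by
    ext x; simp only [mem_Icc, mem_union]; omega
  have hD : Disjoint (Icc 1 (c-1)) (Icc c N) := by
    rw [Finset.disjoint_left]; intro a ha hb
    simp only [mem_Icc] at ha hb; omega
  rw [costSum, hU, Finset.sum_union hD]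
  congr 1
  · rw [costSum]
    apply Finset.sum_congr rfl
    intro t ht; simp only [mem_Icc] at ht
    unfold resumeCost
    congr 2
    ext x
    simp only [Finset.mem_filter, Finset.mem_erase]
    constructor
    · rintro ⟨h1, h2⟩; exact ⟨⟨by omega, h1⟩, h2⟩
    · rintro ⟨⟨_, h1⟩, h2⟩; exact ⟨h1, h2⟩
  · apply Finset.sum_congr rfl
    intro t ht; simp only [mem_Icc] at ht
    unfold resumeCost
    congr 1
    apply le_antisymm
    · apply Finset.sup_le
      intro x hx
      simp only [Finset.mem_filter] at hx
      exact C.le_max' x hx.1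
    · exact Finset.le_sup (f := id) (by simp only [Finset.mem_filter]; exact ⟨hcC, ht.1⟩)

lemma key_int (g q : ℤ) : 2 * q * g ≤ g * (g - 1) + q * (q + 1) := by
  rcases le_or_gt (g - q) 0 with h | h <;> nlinarith

lemma lowerBound (q : ℕ) : ∀ (M : ℕ) (C : Finset ℕ) (N : ℕ), C.card = M →
    C ⊆ Icc 1 N →
    2 * (q : ℤ) * (N + 1) ≤ 2 * (costSum N C : ℤ) + q * (q + 1) * (M + 1) := by
  intro M
  induction M with
  | zero =>
    intro C N hcard hsub
    rw [Finset.card_eq_zero] at hcard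
    subst hcard
    have h := costSum_empty N
    have h' : 2 * (costSum N ∅ : ℤ) = N * (N + 1) := by exact_mod_cast h
    have := key_int (N + 1) q
    push_cast
    nlinarith
  | succ M ih =>
    intro C N hcard hsub
    have hC : C.Nonempty := by
      rw [← Finset.card_pos, hcard]; omega
    set c := C.max' hC with hcdef
    have hcC : c ∈ C := C.max'_mem hC
    have hc := hsub hcC
    simp only [mem_Icc] at hc
    have hsub' : C.erase c ⊆ Icc 1 (c - 1) := by
      intro x hx
      have hx' := Finset.mem_of_mem_erase hx
      have hxc : x ≠ c := Finset.ne_of_mem_erase hx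
      have hxle : x ≤ c := C.le_max' x hx'
      have := hsub hx'
      simp only [mem_Icc] at this ⊢
      omega
    have hcard' : (C.erase c).card = M := by
      rw [Finset.card_erase_of_mem hcC, hcard]; rfl
    have hrec := costSum_rec N C hC hsub
    have hshift := sum_shift c N
    have IH := ih (C.erase c) (c - 1) hcard' hsub'
    have hkey := key_int ((N : ℤ) + 1 - c) q
    have hcast1 : ((c - 1 : ℕ) : ℤ) = (c : ℤ) - 1 := by
      have : 1 ≤ c := hc.1; push_cast [this]; ring
    have hrec' : (costSum N C : ℤ)
        = (costSum (c - 1) (C.erase c) : ℤ) + ((∑ t ∈ Icc c N, (t - c) : ℕ) : ℤ) := by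
      exact_mod_cast hrec
    have hshift' : 2 * ((∑ t ∈ Icc c N, (t - c) : ℕ) : ℤ) = ((N : ℤ) - c) * ((N : ℤ) - c + 1) := by
      have h1 : ((N - c : ℕ) : ℤ) = (N : ℤ) - c := by
        have : c ≤ N := hc.2; push_cast [this]; ring
      calc 2 * ((∑ t ∈ Icc c N, (t - c) : ℕ) : ℤ) = (((N - c) * (N - c + 1) : ℕ) : ℤ) := by
            exact_mod_cast hshift
        _ = ((N : ℤ) - c) * ((N : ℤ) - c + 1) := by push_cast [hc.2]; ring
    rw [hcast1] at IH
    push_cast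
    nlinarith [IH, hkey, hrec', hshift']

def ckpt (M q ρ : ℕ) : Finset ℕ := (Icc 1 M).image (fun i => i * q + min i ρ)

lemma ckpt_mono (q ρ : ℕ) (hq : 1 ≤ q) {i j : ℕ} (hij : i < j) :
    i * q + min i ρ < j * q + min j ρ := by
  have h1 : (i + 1) * q ≤ j * q := Nat.mul_le_mul_right q hij
  have h2 : min i ρ ≤ min j ρ := by omega
  have h3 : (i + 1) * q = i * q + q := by ring
  omega

lemma ckpt_card (M q ρ : ℕ) (hq : 1 ≤ q) : (ckpt M q ρ).card = M := by
  rw [ckpt, Finset.card_image_of_injOn, Nat.card_Icc]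
  · omega
  · intro a _ b _ hab
    by_contra hne
    rcases Nat.lt_or_ge a b with h | h
    · exact absurd hab (Nat.ne_of_lt (ckpt_mono q ρ hq h))
    · have : b < a := by omega
      exact absurd hab.symm (Nat.ne_of_lt (ckpt_mono q ρ hq this))

lemma ckpt_subset (M q ρ N : ℕ) (hq : 1 ≤ q) (hρ : ρ ≤ M) (hN : M * q + ρ ≤ N) :
    ckpt M q ρ ⊆ Icc 1 N := by
  intro x hx
  simp only [ckpt, Finset.mem_image, mem_Icc] at hx ⊢
  obtain ⟨i, hi, rfl⟩ := hx
  constructor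
  · have : 1 * q ≤ i * q := Nat.mul_le_mul_right q hi.1
    omega
  · have h1 : i * q ≤ M * q := Nat.mul_le_mul_right q hi.2
    omega

lemma ckpt_nonempty (M q ρ : ℕ) (hM : 1 ≤ M) : (ckpt M q ρ).Nonempty := by
  refine ⟨1 * q + min 1 ρ, ?_⟩
  simp only [ckpt, Finset.mem_image, mem_Icc]
  exact ⟨1, ⟨le_refl 1, hM⟩, rfl⟩

lemma ckpt_max' (M q ρ : ℕ) (hq : 1 ≤ q) (hρ : ρ ≤ M + 1)
    (h : (ckpt (M + 1) q ρ).Nonempty) :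
    (ckpt (M + 1) q ρ).max' h = (M + 1) * q + ρ := by
  have hmem : (M + 1) * q + ρ ∈ ckpt (M + 1) q ρ := by
    simp only [ckpt, Finset.mem_image, mem_Icc]
    exact ⟨M + 1, ⟨by omega, le_refl _⟩, by rw [min_eq_right hρ]⟩
  apply le_antisymm
  · apply Finset.max'_le
    intro x hx
    simp only [ckpt, Finset.mem_image, mem_Icc] at hx
    obtain ⟨i, hi, rfl⟩ := hx
    rcases Nat.lt_or_ge i (M + 1) with hlt | hge
    · have := ckpt_mono q ρ hq hlt
      rw [min_eq_right hρ] at this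
      omega
    · have : i = M + 1 := by omega
      subst this
      rw [min_eq_right hρ]
  · exact Finset.le_max' _ _ hmem

lemma ckpt_erase (M q ρ : ℕ) (hq : 1 ≤ q) (hρ : ρ ≤ M + 1) :
    (ckpt (M + 1) q ρ).erase ((M + 1) * q + ρ) = ckpt M q ρ := by
  ext x
  simp only [ckpt, Finset.mem_erase, Finset.mem_image, mem_Icc]
  constructor
  · rintro ⟨hne, i, hi, rfl⟩
    refine ⟨i, ⟨hi.1, ?_⟩, rfl⟩
    by_contra hgt
    have : i = M + 1 := by omega
    subst this
    rw [min_eq_right hρ] at hne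
    exact hne rfl
  · rintro ⟨i, hi, rfl⟩
    have hlt := ckpt_mono q ρ hq (show i < M + 1 by omega)
    rw [min_eq_right hρ] at hlt
    exact ⟨by omega, i, ⟨hi.1, by omega⟩, rfl⟩

lemma ckpt_cost : ∀ (M q ρ N : ℕ), 1 ≤ q → ρ ≤ M → N + 1 = (M + 1) * q + ρ →
    2 * costSum N (ckpt M q ρ) = (M + 1 - ρ) * (q * (q - 1)) + ρ * (q * (q + 1)) := by
  intro M
  induction M with
  | zero =>
    intro q ρ N hq hρ hN
    have hρ0 : ρ = 0 := by omega
    subst hρ0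
    have hN' : N = q - 1 := by omega
    have hempty : ckpt 0 q 0 = ∅ := by
      simp [ckpt]
    rw [hempty, costSum_empty, hN']
    have : q - 1 + 1 = q := by omega
    rw [this]
    simp [mul_comm]
  | succ M ih =>
    intro q ρ N hq hρ hN
    obtain ⟨A, hA⟩ : ∃ A, (M + 1) * q = A := ⟨_, rfl⟩
    have hA2 : (M + 1 + 1) * q = A + q := by rw [← hA]; ring
    have hA1 : 1 ≤ A := hA ▸ Nat.mul_pos (by omega) hq
    have hsub : ckpt (M + 1) q ρ ⊆ Icc 1 N := by
      apply ckpt_subset _ _ _ _ hq (by omega)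
      omega
    have hne : (ckpt (M + 1) q ρ).Nonempty := ckpt_nonempty _ _ _ (by omega)
    have hmax := ckpt_max' M q ρ hq hρ hne
    obtain ⟨c, hc⟩ : ∃ c, (M + 1) * q + ρ = c := ⟨_, rfl⟩
    rw [hc] at hmax
    have hcA : c = A + ρ := by omega
    have hrec := costSum_rec N (ckpt (M + 1) q ρ) hne hsub
    rw [hmax] at hrec
    rw [show (ckpt (M + 1) q ρ).erase c = ckpt M q ρ from hc ▸ ckpt_erase M q ρ hq hρ] at hrec
    have hshift := sum_shift c N
    have hNc : N - c = q - 1 := by omega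
    rw [hNc, show q - 1 + 1 = q by omega] at hshift
    have hcomm : (q - 1) * q = q * (q - 1) := mul_comm _ _
    rcases Nat.lt_or_ge ρ (M + 1) with hlt | hge
    · -- ρ ≤ M
      have hIH := ih q ρ (c - 1) hq (by omega) (by omega)
      have hdist : (M + 1 + 1 - ρ) * (q * (q - 1))
          = (M + 1 - ρ) * (q * (q - 1)) + q * (q - 1) := by
        rw [show M + 1 + 1 - ρ = (M + 1 - ρ) + 1 by omega]; ring
      have h2 : 2 * costSum N (ckpt (M + 1) q ρ)
          = 2 * costSum (c - 1) (ckpt M q ρ) + 2 * ∑ t ∈ Icc c N, (t - c) := by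
        rw [hrec]; ring
      linarith [h2, hIH, hshift, hcomm, hdist]
    · -- ρ = M + 1
      have hρ' : ρ = M + 1 := by omega
      subst hρ'
      have hconv : ckpt M q (M + 1) = ckpt M (q + 1) 0 := by
        unfold ckpt
        apply Finset.image_congr
        intro i hi
        simp only [Finset.coe_Icc, Set.mem_Icc] at hi
        show i * q + min i (M + 1) = i * (q + 1) + min i 0
        have h1 : min i (M + 1) = i := by omega
        rw [h1, Nat.min_zero]
        ring
      rw [hconv] at hrec
      have hIH := ih (q + 1) 0 (c - 1) (by omega) (Nat.zero_le M) (by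
        have : (M + 1) * (q + 1) = A + (M + 1) := by rw [← hA]; ring
        omega)
      have h2 : 2 * costSum N (ckpt (M + 1) q (M + 1))
          = 2 * costSum (c - 1) (ckpt M (q + 1) 0) + 2 * ∑ t ∈ Icc c N, (t - c) := by
        rw [hrec]; ring
      have e1 : (M + 1 - 0) * ((q + 1) * (q + 1 - 1)) = (M + 1) * (q * (q + 1)) := by
        simp only [Nat.sub_zero, Nat.add_sub_cancel]; ring
      have e3 : (M + 1 + 1 - (M + 1)) * (q * (q - 1)) = q * (q - 1) := by
        rw [show M + 1 + 1 - (M + 1) = 1 by omega, one_mul]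
      linarith [h2, hIH, hshift, hcomm, e1, e3]

lemma costSum_cast (N : ℕ) (C : Finset ℕ) :
    ((costSum N C : ℕ) : ℝ) = ∑ t ∈ Icc 1 N, (resumeCost C t : ℝ) := by
  rw [costSum]; push_cast; rfl

/-- With `q = ⌊(N+1)/(M+1)⌋`, `ρ = (N+1) mod (M+1)`, `K = M+1`, the optimal expected
recomputation with `M` checkpoints under the uniform law on `{1,…,N}` is
`(1/N)[(K-ρ) q(q-1)/2 + ρ q(q+1)/2]`. -/
theorem stmt6 (N M : ℕ) (hN : 1 ≤ N) (hM : M ≤ N) :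
    IsLeast
      {x : ℝ | ∃ C : Finset ℕ, C ⊆ Finset.Icc 1 N ∧ C.card = M ∧
          x = (1 / (N : ℝ)) * ∑ t ∈ Finset.Icc 1 N, (resumeCost C t : ℝ)}
      ((1 / (N : ℝ)) *
        (((M + 1 - (N + 1) % (M + 1) : ℕ) : ℝ) *
            ((((N + 1) / (M + 1) : ℕ) : ℝ) * ((((N + 1) / (M + 1) : ℕ) : ℝ) - 1) / 2)
          + (((N + 1) % (M + 1) : ℕ) : ℝ) *
            ((((N + 1) / (M + 1) : ℕ) : ℝ) * ((((N + 1) / (M + 1) : ℕ) : ℝ) + 1) / 2))) := by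
  set q := (N + 1) / (M + 1) with hqdef
  set ρ := (N + 1) % (M + 1) with hρdef
  have hdm : (M + 1) * q + ρ = N + 1 := Nat.div_add_mod (N + 1) (M + 1)
  have hq : 1 ≤ q := by
    rw [hqdef]
    exact (Nat.one_le_div_iff (by omega)).mpr (by omega)
  have hρ : ρ ≤ M := by
    have := Nat.mod_lt (N + 1) (show 0 < M + 1 by omega)
    omega
  obtain ⟨B, hB⟩ : ∃ B, M * q = B := ⟨_, rfl⟩
  have hB2 : (M + 1) * q = B + q := by rw [← hB]; ring
  constructor
  · -- membership
    refine ⟨ckpt M q ρ, ckpt_subset M q ρ N hq hρ (by omega), ckpt_card M q ρ hq, ?_⟩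
    have hcost := ckpt_cost M q ρ N hq hρ (by omega)
    have hcast : 2 * ((costSum N (ckpt M q ρ) : ℕ) : ℝ)
        = ((M + 1 - ρ : ℕ) : ℝ) * (((q : ℕ) : ℝ) * (((q : ℕ) : ℝ) - 1))
          + ((ρ : ℕ) : ℝ) * (((q : ℕ) : ℝ) * (((q : ℕ) : ℝ) + 1)) := by
      have := congrArg (fun n : ℕ => (n : ℝ)) hcost
      push_cast [Nat.cast_sub hq] at this ⊢
      linarith
    rw [← costSum_cast]
    congr 1
    linarith [hcast]
  · -- lower bound
    rintro x ⟨C, hsub, hcard, rfl⟩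
    have hlb := lowerBound q M C N hcard hsub
    have hdmZ : ((M : ℤ) + 1) * q + ρ = (N : ℤ) + 1 := by exact_mod_cast hdm
    have hidZ : (((M : ℤ) + 1) - ρ) * ((q : ℤ) * ((q : ℤ) - 1)) + (ρ : ℤ) * ((q : ℤ) * ((q : ℤ) + 1))
        = 2 * q * ((N : ℤ) + 1) - (q : ℤ) * ((q : ℤ) + 1) * ((M : ℤ) + 1) := by
      rw [← hdmZ]; ring
    have hZ : (((M : ℤ) + 1) - ρ) * ((q : ℤ) * ((q : ℤ) - 1)) + (ρ : ℤ) * ((q : ℤ) * ((q : ℤ) + 1))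
        ≤ 2 * (costSum N C : ℤ) := by linarith
    have hR : (((M : ℝ) + 1) - ρ) * ((q : ℝ) * ((q : ℝ) - 1)) + (ρ : ℝ) * ((q : ℝ) * ((q : ℝ) + 1))
        ≤ 2 * ((costSum N C : ℕ) : ℝ) := by exact_mod_cast hZ
    rw [← costSum_cast]
    apply mul_le_mul_of_nonneg_left _ (by positivity)
    have hsubcast : ((M + 1 - ρ : ℕ) : ℝ) = (M : ℝ) + 1 - ρ := by
      push_cast [Nat.cast_sub (show ρ ≤ M + 1 by omega)]; ring
    rw [hsubcast]
    linarith
end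

section
/- With the setup of the exponentially weighted histogram p̂_t^{(γ)} = ((1-γ)/(1-γ^t)) Σ_{s=1}^t γ^{t-s} e_{T_s}, where T_s ~ p_s independently, one has E[‖p̂_t^{(γ)} - p_t‖_1] ≤ ((1-γ)/(1-γ^t)) Σ_{s=1}^t γ^{t-s} ‖p_s - p_t‖_1 + √(N · ((1-γ)/(1+γ)) · ((1+γ^t)/(1-γ^t))). -/
open Finset MeasureTheory ProbabilityTheory

/-! The mean of the histogram is the mixture `m = ∑ₛ wₛ pₛ`, so the triangle inequality splits the
`ℓ¹` error into the bias `‖m - pₜ‖₁ ≤ ∑ₛ wₛ ‖pₛ - pₜ‖₁` and the fluctuation `E‖p̂ - m‖₁`.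
Coordinatewise `E|p̂ⱼ - mⱼ| ≤ √(Var p̂ⱼ)`, Cauchy–Schwarz over the `N` coordinates gives
`√(N ∑ⱼ Var p̂ⱼ)`, and pairwise independence yields `∑ⱼ Var p̂ⱼ ≤ ∑ₛ wₛ² ∑ⱼ pₛ(j) ≤ ∑ₛ wₛ²`,
a geometric sum. -/

section Variance

variable {Ω : Type*} [MeasurableSpace Ω] {μ : Measure Ω} [IsProbabilityMeasure μ]

lemma integral_abs_le_sqrt_integral_sq {Y : Ω → ℝ} (hY : MemLp Y 2 μ) :
    ∫ ω, |Y ω| ∂μ ≤ √(∫ ω, Y ω ^ 2 ∂μ) := by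
  have h := variance_nonneg |Y| μ
  rw [variance_eq_sub hY.abs] at h
  refine Real.le_sqrt_of_sq_le ?_
  simpa [sq_abs] using h

lemma integral_abs_sub_le_sqrt_variance_add {X : Ω → ℝ} (hX : MemLp X 2 μ) (q : ℝ) :
    ∫ ω, |X ω - q| ∂μ ≤ √(Var[X; μ]) + |μ[X] - q| := by
  have hXc : MemLp (fun ω ↦ X ω - μ[X]) 2 μ := hX.sub (memLp_const _)
  calc ∫ ω, |X ω - q| ∂μ ≤ ∫ ω, |X ω - μ[X]| + |μ[X] - q| ∂μ :=
        integral_mono (hX.integrable one_le_two |>.sub (integrable_const q)).abs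
          (hXc.integrable one_le_two |>.abs.add (integrable_const _))
          fun ω ↦ abs_sub_le _ _ _
    _ = ∫ ω, |X ω - μ[X]| ∂μ + |μ[X] - q| := by
        rw [integral_add (hXc.integrable one_le_two).abs (integrable_const _)]
        simp
    _ ≤ √(Var[X; μ]) + |μ[X] - q| := by
        gcongr
        rw [variance_eq_integral hX.aemeasurable]
        exact integral_abs_le_sqrt_integral_sq hXc

lemma integral_sum_abs_sub_le {α : Type*} (J : Finset α) {X : α → Ω → ℝ}
    (hX : ∀ j ∈ J, MemLp (X j) 2 μ) (q : α → ℝ) :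
    ∫ ω, ∑ j ∈ J, |X j ω - q j| ∂μ
      ≤ ∑ j ∈ J, |μ[X j] - q j| + √(#J * ∑ j ∈ J, Var[X j; μ]) := by
  have hint : ∀ j ∈ J, Integrable (fun ω ↦ |X j ω - q j|) μ := fun j hj ↦
    ((hX j hj).integrable one_le_two |>.sub (integrable_const _)).abs
  have hCS : ∑ j ∈ J, √(Var[X j; μ]) ≤ √(#J * ∑ j ∈ J, Var[X j; μ]) := by
    have := Real.sum_sqrt_mul_sqrt_le J (fun j ↦ variance_nonneg (X j) μ) (fun _ ↦ zero_le_one)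
    simpa [Real.sqrt_mul (Nat.cast_nonneg _), mul_comm] using this
  calc ∫ ω, ∑ j ∈ J, |X j ω - q j| ∂μ = ∑ j ∈ J, ∫ ω, |X j ω - q j| ∂μ :=
        integral_finsetSum J hint
    _ ≤ ∑ j ∈ J, (√(Var[X j; μ]) + |μ[X j] - q j|) :=
        sum_le_sum fun j hj ↦ integral_abs_sub_le_sqrt_variance_add (hX j hj) (q j)
    _ ≤ ∑ j ∈ J, |μ[X j] - q j| + √(#J * ∑ j ∈ J, Var[X j; μ]) := by
        rw [sum_add_distrib, add_comm]
        gcongr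

lemma variance_indicator_one_le {A : Set Ω} (hA : MeasurableSet A) :
    Var[A.indicator 1; μ] ≤ μ.real A := by
  have h01 : ∀ᵐ ω ∂μ, A.indicator (1 : Ω → ℝ) ω ∈ Set.Icc 0 1 := ae_of_all _ fun ω ↦ by
    by_cases hω : ω ∈ A <;> simp [hω]
  calc Var[A.indicator 1; μ] ≤ (1 - μ.real A) * (μ.real A - 0) := by
        simpa [integral_indicator_one hA] using
          variance_le_sub_mul_sub h01 ((measurable_one.indicator hA).aemeasurable)
    _ ≤ μ.real A := by nlinarith [measureReal_nonneg (μ := μ) (s := A)]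

end Variance

section WeightedHistogram

variable {Ω ι α : Type*} [DecidableEq α]

def weightedHistogram (S : Finset ι) (w : ι → ℝ) (T : ι → Ω → α) (j : α) (ω : Ω) : ℝ :=
  ∑ s ∈ S, w s * if T s ω = j then 1 else 0

lemma ite_eq_indicator_preimage (f : Ω → α) (j : α) (ω : Ω) :
    (if f ω = j then (1 : ℝ) else 0) = (f ⁻¹' {j}).indicator 1 ω := by
  by_cases h : f ω = j <;> simp [h]

lemma weightedHistogram_eq_sum_indicator (S : Finset ι) (w : ι → ℝ) (T : ι → Ω → α) (j : α) :
    weightedHistogram S w T j = ∑ s ∈ S, w s • (T s ⁻¹' {j}).indicator 1 := by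
  ext ω
  simp only [weightedHistogram, ite_eq_indicator_preimage, Finset.sum_apply, Pi.smul_apply,
    smul_eq_mul]

variable [MeasurableSpace Ω] {μ : Measure Ω} [MeasurableSpace α] [MeasurableSingletonClass α]
  {S : Finset ι} {w : ι → ℝ} {T : ι → Ω → α}

lemma memLp_weightedHistogram [IsFiniteMeasure μ] (hT : ∀ s ∈ S, Measurable (T s)) (j : α) :
    MemLp (weightedHistogram S w T j) 2 μ := by
  rw [weightedHistogram_eq_sum_indicator]
  exact memLp_finsetSum' S fun s hs ↦
    (memLp_indicator_const 2 (hT s hs (measurableSet_singleton j)) 1 (.inr (by simp))).const_smul _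

lemma integral_weightedHistogram [IsFiniteMeasure μ] (hT : ∀ s ∈ S, Measurable (T s)) (j : α) :
    μ[weightedHistogram S w T j] = ∑ s ∈ S, w s * μ.real (T s ⁻¹' {j}) := by
  simp only [weightedHistogram, ite_eq_indicator_preimage]
  rw [integral_finsetSum]
  · refine sum_congr rfl fun s hs ↦ ?_
    rw [integral_const_mul, integral_indicator_one (hT s hs (measurableSet_singleton j))]
  · exact fun s hs ↦
      ((integrable_const 1).indicator (hT s hs (measurableSet_singleton j))).const_mul _

lemma variance_weightedHistogram_le [IsProbabilityMeasure μ] (hT : ∀ s ∈ S, Measurable (T s))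
    (hindep : (S : Set ι).Pairwise fun s r ↦ IndepFun (T s) (T r) μ) (j : α) :
    Var[weightedHistogram S w T j; μ] ≤ ∑ s ∈ S, w s ^ 2 * μ.real (T s ⁻¹' {j}) := by
  have hcomp : ∀ s, w s • (T s ⁻¹' {j}).indicator 1
      = (fun a ↦ w s * ({j} : Set α).indicator 1 a) ∘ T s := fun s ↦ by
    ext ω
    simp only [Pi.smul_apply, smul_eq_mul, Function.comp_apply, ← Set.indicator_comp_right]
    rfl
  have hmeas : ∀ s, Measurable fun a : α ↦ w s * ({j} : Set α).indicator (1 : α → ℝ) a :=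
    fun s ↦ (measurable_one.indicator (measurableSet_singleton j)).const_mul _
  rw [weightedHistogram_eq_sum_indicator, IndepFun.variance_sum]
  · refine sum_le_sum fun s hs ↦ ?_
    rw [variance_smul]
    exact mul_le_mul_of_nonneg_left
      (variance_indicator_one_le (hT s hs (measurableSet_singleton j))) (sq_nonneg _)
  · exact fun s hs ↦ (memLp_indicator_const 2 (hT s hs (measurableSet_singleton j)) 1
      (.inr (by simp))).const_smul _
  · intro s hs r hr hsr
    simp only [hcomp]
    exact (hindep hs hr hsr).comp (hmeas s) (hmeas r)

lemma sum_variance_weightedHistogram_le [IsProbabilityMeasure μ]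
    (hT : ∀ s ∈ S, Measurable (T s))
    (hindep : (S : Set ι).Pairwise fun s r ↦ IndepFun (T s) (T r) μ) (J : Finset α) :
    ∑ j ∈ J, Var[weightedHistogram S w T j; μ] ≤ ∑ s ∈ S, w s ^ 2 := by
  calc ∑ j ∈ J, Var[weightedHistogram S w T j; μ]
      ≤ ∑ j ∈ J, ∑ s ∈ S, w s ^ 2 * μ.real (T s ⁻¹' {j}) :=
        sum_le_sum fun j _ ↦ variance_weightedHistogram_le hT hindep j
    _ = ∑ s ∈ S, w s ^ 2 * μ.real (T s ⁻¹' J) := by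
        rw [sum_comm]
        refine sum_congr rfl fun s hs ↦ ?_
        rw [← mul_sum, sum_measureReal_preimage_singleton J
          fun j _ ↦ hT s hs (measurableSet_singleton j)]
    _ ≤ ∑ s ∈ S, w s ^ 2 := sum_le_sum fun s _ ↦
        mul_le_of_le_one_right (sq_nonneg _) measureReal_le_one

end WeightedHistogram

section ExponentialWeights

variable {γ : ℝ} {t : ℕ}

noncomputable def expWeight (γ : ℝ) (t s : ℕ) : ℝ := (1 - γ) * γ ^ (t - s) / (1 - γ ^ t)

lemma sum_Icc_pow_sub {R : Type*} [CommSemiring R] (x : R) (t : ℕ) :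
    ∑ s ∈ Icc 1 t, x ^ (t - s) = ∑ k ∈ range t, x ^ k := by
  rw [← Ico_add_one_right_eq_Icc, sum_Ico_eq_sum_range, ← sum_range_reflect]
  refine sum_congr rfl fun k hk ↦ ?_
  rw [mem_range] at hk
  congr 1
  omega

lemma expWeight_nonneg (hγ0 : 0 ≤ γ) (hγ1 : γ < 1) (s : ℕ) : 0 ≤ expWeight γ t s :=
  div_nonneg (mul_nonneg (sub_nonneg.2 hγ1.le) (pow_nonneg hγ0 _))
    (sub_nonneg.2 (pow_le_one₀ hγ0 hγ1.le))

lemma sum_expWeight (hγ0 : 0 ≤ γ) (hγ1 : γ < 1) (ht : 1 ≤ t) :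
    ∑ s ∈ Icc 1 t, expWeight γ t s = 1 := by
  have hγt : 1 - γ ^ t ≠ 0 := (sub_pos.2 (pow_lt_one₀ hγ0 hγ1 (by omega))).ne'
  simp only [expWeight, ← sum_div, ← mul_sum, sum_Icc_pow_sub, mul_neg_geom_sum, div_self hγt]

lemma sum_expWeight_sq (hγ0 : 0 ≤ γ) (hγ1 : γ < 1) (ht : 1 ≤ t) :
    ∑ s ∈ Icc 1 t, expWeight γ t s ^ 2 = (1 - γ) / (1 + γ) * ((1 + γ ^ t) / (1 - γ ^ t)) := by
  have hγt : 1 - γ ^ t ≠ 0 := (sub_pos.2 (pow_lt_one₀ hγ0 hγ1 (by omega))).ne'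
  have hγ2 : 1 - γ ^ 2 ≠ 0 := (sub_pos.2 (pow_lt_one₀ hγ0 hγ1 two_ne_zero)).ne'
  have hgeom : ∑ k ∈ range t, (γ ^ 2) ^ k = (1 - (γ ^ t) ^ 2) / (1 - γ ^ 2) := by
    rw [eq_div_iff hγ2, mul_comm, mul_neg_geom_sum, ← pow_mul, ← pow_mul, mul_comm]
  calc ∑ s ∈ Icc 1 t, expWeight γ t s ^ 2
      = (1 - γ) ^ 2 / (1 - γ ^ t) ^ 2 * ∑ s ∈ Icc 1 t, (γ ^ 2) ^ (t - s) := by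
        rw [mul_sum]
        refine sum_congr rfl fun s _ ↦ ?_
        rw [expWeight, div_pow, mul_pow, ← pow_mul, mul_comm (t - s), pow_mul]
        ring
    _ = (1 - γ) / (1 + γ) * ((1 + γ ^ t) / (1 - γ ^ t)) := by
        have : 1 + γ ≠ 0 := by positivity
        rw [sum_Icc_pow_sub, hgeom]
        field_simp
        ring

end ExponentialWeights

lemma sum_abs_sum_mul_sub_le {ι α : Type*} {S : Finset ι} (J : Finset α) {w : ι → ℝ}
    (hw0 : ∀ s ∈ S, 0 ≤ w s) (hw1 : ∑ s ∈ S, w s = 1) (P : ι → α → ℝ) (q : α → ℝ) :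
    ∑ j ∈ J, |∑ s ∈ S, w s * P s j - q j| ≤ ∑ s ∈ S, w s * ∑ j ∈ J, |P s j - q j| := by
  calc ∑ j ∈ J, |∑ s ∈ S, w s * P s j - q j| = ∑ j ∈ J, |∑ s ∈ S, w s * (P s j - q j)| := by
        simp only [mul_sub, sum_sub_distrib, ← sum_mul, hw1, one_mul]
    _ ≤ ∑ j ∈ J, ∑ s ∈ S, w s * |P s j - q j| := by
        refine sum_le_sum fun j _ ↦ (abs_sum_le_sum_abs _ _).trans_eq (sum_congr rfl fun s hs ↦ ?_)
        rw [abs_mul, abs_of_nonneg (hw0 s hs)]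
    _ = ∑ s ∈ S, w s * ∑ j ∈ J, |P s j - q j| := by
        rw [sum_comm]
        simp only [mul_sum]

lemma ProbabilityTheory.iIndepFun.pairwise_indepFun_Icc {Ω α : Type*} [MeasurableSpace Ω]
    [MeasurableSpace α] {μ : Measure Ω} {t : ℕ} {T : ℕ → Ω → α}
    (h : iIndepFun (fun s : Fin t ↦ T (s + 1)) μ) :
    (Icc 1 t : Set ℕ).Pairwise fun s r ↦ IndepFun (T s) (T r) μ := by
  intro s hs r hr hsr
  simp only [coe_Icc, Set.mem_Icc] at hs hr
  have := h.indepFun (i := ⟨s - 1, by omega⟩) (j := ⟨r - 1, by omega⟩) (by simp; omega)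
  simpa [Nat.sub_add_cancel hs.1, Nat.sub_add_cancel hr.1] using this

theorem stmt15_general (N t : ℕ) (ht : 1 ≤ t)
    (γ : ℝ) (hγ0 : 0 < γ) (hγ1 : γ < 1)
    {Ω : Type*} [MeasurableSpace Ω] (μ : Measure Ω) [IsProbabilityMeasure μ]
    (p : ℕ → ℕ → ℝ)
    (hp0 : ∀ s ∈ Finset.Icc 1 t, ∀ j, 0 ≤ p s j)
    (T : ℕ → Ω → ℕ) (hmeas : ∀ s ∈ Finset.Icc 1 t, Measurable (T s))
    (hlaw : ∀ s ∈ Finset.Icc 1 t, ∀ j, μ {ω | T s ω = j} = ENNReal.ofReal (p s j))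
    (hindep : ProbabilityTheory.iIndepFun
        (fun s : Fin t => T (s + 1)) μ) :
    ∫ ω, ∑ j ∈ Finset.Icc 1 N,
        |(∑ s ∈ Finset.Icc 1 t, ((1 - γ) * γ ^ (t - s) / (1 - γ ^ t)) *
            (if T s ω = j then (1 : ℝ) else 0)) - p t j| ∂μ
      ≤ ((1 - γ) / (1 - γ ^ t)) * ∑ s ∈ Finset.Icc 1 t, γ ^ (t - s) *
          (∑ j ∈ Finset.Icc 1 N, |p s j - p t j|)
        + Real.sqrt ((N : ℝ) * ((1 - γ) / (1 + γ)) * ((1 + γ ^ t) / (1 - γ ^ t))) := by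
  set X := weightedHistogram (Icc 1 t) (expWeight γ t) T
  have hmean : ∀ j, μ[X j] = ∑ s ∈ Icc 1 t, expWeight γ t s * p s j := fun j ↦ by
    rw [integral_weightedHistogram hmeas]
    refine sum_congr rfl fun s hs ↦ ?_
    rw [measureReal_def, show T s ⁻¹' {j} = {ω | T s ω = j} from rfl, hlaw s hs,
      ENNReal.toReal_ofReal (hp0 s hs j)]
  calc _ = ∫ ω, ∑ j ∈ Icc 1 N, |X j ω - p t j| ∂μ := rfl
    _ ≤ ∑ j ∈ Icc 1 N, |μ[X j] - p t j| + √(#(Icc 1 N) * ∑ j ∈ Icc 1 N, Var[X j; μ]) :=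
        integral_sum_abs_sub_le _ (fun j _ ↦ memLp_weightedHistogram hmeas j) _
    _ ≤ ∑ s ∈ Icc 1 t, expWeight γ t s * ∑ j ∈ Icc 1 N, |p s j - p t j|
          + √(N * ∑ s ∈ Icc 1 t, expWeight γ t s ^ 2) := by
        simp only [hmean, Nat.card_Icc, add_tsub_cancel_right]
        gcongr
        · exact sum_abs_sum_mul_sub_le _ (fun s _ ↦ expWeight_nonneg hγ0.le hγ1 s)
            (sum_expWeight hγ0.le hγ1 ht) p (p t)
        · exact sum_variance_weightedHistogram_le hmeas hindep.pairwise_indepFun_Icc _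
    _ = _ := by
        rw [sum_expWeight_sq hγ0.le hγ1 ht, mul_sum, ← mul_assoc]
        congr 1
        exact sum_congr rfl fun s _ ↦ by rw [expWeight]; ring

theorem stmt15 (N t : ℕ) (hN : 1 ≤ N) (ht : 1 ≤ t)
    (γ : ℝ) (hγ0 : 0 < γ) (hγ1 : γ < 1)
    {Ω : Type*} [MeasurableSpace Ω] (μ : Measure Ω) [IsProbabilityMeasure μ]
    (p : ℕ → ℕ → ℝ)
    (hp0 : ∀ s ∈ Finset.Icc 1 t, ∀ j, 0 ≤ p s j)
    (hp1 : ∀ s ∈ Finset.Icc 1 t, ∑ j ∈ Finset.Icc 1 N, p s j = 1)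
    (T : ℕ → Ω → ℕ) (hmeas : ∀ s ∈ Finset.Icc 1 t, Measurable (T s))
    (hrange : ∀ s ∈ Finset.Icc 1 t, ∀ ω, T s ω ∈ Finset.Icc 1 N)
    (hlaw : ∀ s ∈ Finset.Icc 1 t, ∀ j, μ {ω | T s ω = j} = ENNReal.ofReal (p s j))
    (hindep : ProbabilityTheory.iIndepFun
        (fun s : Fin t => T (s + 1)) μ) :
    ∫ ω, ∑ j ∈ Finset.Icc 1 N,
        |(∑ s ∈ Finset.Icc 1 t, ((1 - γ) * γ ^ (t - s) / (1 - γ ^ t)) *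
            (if T s ω = j then (1 : ℝ) else 0)) - p t j| ∂μ
      ≤ ((1 - γ) / (1 - γ ^ t)) * ∑ s ∈ Finset.Icc 1 t, γ ^ (t - s) *
          (∑ j ∈ Finset.Icc 1 N, |p s j - p t j|)
        + Real.sqrt ((N : ℝ) * ((1 - γ) / (1 + γ)) * ((1 + γ ^ t) / (1 - γ ^ t))) :=
  stmt15_general N t ht γ hγ0 hγ1 μ p hp0 T hmeas hlaw hindep
end

section
/- For any positive integers g_0,...,g_M summing to N+1 = qK+ρ, where K = M+1 and 0 ≤ ρ < K, one has Σ_i g_i(g_i-1)/2 ≥ (K-ρ)q(q-1)/2 + ρ q(q+1)/2. -/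
open Finset

lemma two_choose_two (n : ℕ) : 2 * Nat.choose n 2 = n * (n - 1) := by
  rw [Nat.choose_two_right]
  apply Nat.mul_div_cancel'
  cases n with
  | zero => simp
  | succ m =>
    simp only [Nat.succ_sub_one]
    rw [Nat.mul_comm]
    exact (Nat.even_mul_succ_self m).two_dvd

lemma tangent_bound (q n : ℕ) : 2 * (q * n) ≤ 2 * Nat.choose n 2 + (q * q + q) := by
  rw [two_choose_two]
  cases n with
  | zero => simp
  | succ m =>
    simp only [Nat.succ_sub_one]
    rcases le_or_gt q m with h | h
    · nlinarith
    · nlinarith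

lemma main_bound (K q r S : ℕ) (g : Fin K → ℕ)
    (hdm : K * q + r = S) (hrK : r < K) (hsum : ∑ i, g i = S) :
    (K - r) * (q * (q - 1) / 2) + r * (q * (q + 1) / 2) ≤ ∑ i, g i * (g i - 1) / 2 := by
  have e1 : q * (q - 1) / 2 = Nat.choose q 2 := (Nat.choose_two_right q).symm
  have e2 : q * (q + 1) / 2 = Nat.choose (q + 1) 2 := by
    rw [Nat.choose_two_right, Nat.succ_sub_one, Nat.mul_comm]
  have e3 : ∀ i : Fin K, g i * (g i - 1) / 2 = Nat.choose (g i) 2 := fun i =>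
    (Nat.choose_two_right (g i)).symm
  rw [e1, e2, Finset.sum_congr rfl (fun i _ => e3 i)]
  have hsumle : ∑ i : Fin K, 2 * (q * g i) ≤
      ∑ i : Fin K, (2 * Nat.choose (g i) 2 + (q * q + q)) :=
    Finset.sum_le_sum fun i _ => tangent_bound q (g i)
  have hL : ∑ i : Fin K, 2 * (q * g i) = 2 * (q * S) := by
    rw [← Finset.mul_sum, ← Finset.mul_sum, hsum]
  have hR : ∑ i : Fin K, (2 * Nat.choose (g i) 2 + (q * q + q))
      = 2 * ∑ i : Fin K, Nat.choose (g i) 2 + K * (q * q + q) := by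
    rw [Finset.sum_add_distrib, ← Finset.mul_sum, Finset.sum_const, Finset.card_univ,
      Fintype.card_fin, smul_eq_mul]
  rw [hL, hR] at hsumle
  obtain ⟨t, ht⟩ : ∃ t, K = t + r := ⟨K - r, by omega⟩
  have key : 2 * ((K - r) * Nat.choose q 2 + r * Nat.choose (q + 1) 2) + K * (q * q + q)
      = 2 * (q * S) := by
    have h1 : 2 * ((K - r) * Nat.choose q 2 + r * Nat.choose (q + 1) 2)
        = (K - r) * (q * (q - 1)) + r * ((q + 1) * q) := by
      rw [Nat.mul_add, ← Nat.mul_assoc, ← Nat.mul_assoc, Nat.mul_comm 2 (K - r),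
        Nat.mul_comm 2 r, Nat.mul_assoc, Nat.mul_assoc, two_choose_two, two_choose_two,
        Nat.succ_sub_one]
    rw [h1]
    have htk : K - r = t := by omega
    rw [htk, ← hdm]
    cases q with
    | zero => simp
    | succ p =>
      simp only [Nat.succ_sub_one, ht]
      ring
  omega

theorem stmt19 (N M : ℕ) (hN : 1 ≤ N) (g : Fin (M + 1) → ℕ)
    (hpos : ∀ i, 0 < g i) (hsum : ∑ i, g i = N + 1) :
    (M + 1 - (N + 1) % (M + 1)) * ((N + 1) / (M + 1) * ((N + 1) / (M + 1) - 1) / 2)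
      + (N + 1) % (M + 1) * ((N + 1) / (M + 1) * ((N + 1) / (M + 1) + 1) / 2)
      ≤ ∑ i, g i * (g i - 1) / 2 :=
  main_bound (M + 1) ((N + 1) / (M + 1)) ((N + 1) % (M + 1)) (N + 1) g
    (Nat.div_add_mod (N + 1) (M + 1)) (Nat.mod_lt _ (by omega)) hsum
end
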